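/- arXiv:1709.00276 — 5 statements merged into one kernel-verified Lean document; each statement's English description precedes it below -/
import Mathlib

section
/- The set Ω = {z ∈ ℂ : 0 < Im z < 1} ∪ {0} is unbounded and convex, but there is no half-line (open or closed) contained in Ω that contains the point 0. -/
theorem stmt_4 :
    let Ω : Set ℂ := {z : ℂ | 0 < z.im ∧ z.im < 1} ∪ {0}
    ¬ Bornology.IsBounded Ω ∧ Convex ℝ Ω ∧
    ¬ ∃ (p h : ℂ), ‖h‖ = 1 ∧
      (0 : ℂ) ∈ {z : ℂ | ∃ t : ℝ, 0 ≤ t ∧ z = p + (t : ℂ) * h} ∧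
      {z : ℂ | ∃ t : ℝ, 0 ≤ t ∧ z = p + (t : ℂ) * h} ⊆ Ω := by
  intro Ω
  refine ⟨?_, ?_, ?_⟩
  · -- unbounded
    intro hb
    rw [isBounded_iff_forall_norm_le] at hb
    obtain ⟨C, hC⟩ := hb
    set z : ℂ := Complex.mk (|C| + 1) (1/2) with hz
    have hzΩ : z ∈ Ω := Or.inl ⟨by norm_num [hz], by norm_num [hz]⟩
    have h1 := hC z hzΩ
    have h2 : |z.re| ≤ ‖z‖ := Complex.abs_re_le_norm z
    have hre : z.re = |C| + 1 := rfl
    have : |C| + 1 ≤ C := by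
      calc |C| + 1 = |z.re| := by rw [hre, abs_of_pos (by positivity : (0:ℝ) < |C| + 1)]
        _ ≤ ‖z‖ := h2
        _ ≤ C := h1
    have := le_abs_self C
    linarith
  · -- convex
    intro x hx y hy a b ha hb hab
    rcases hx with hx | hx <;> rcases hy with hy | hy
    · rcases eq_or_lt_of_le ha with ha0 | ha0
      · left
        have hb1 : b = 1 := by linarith
        simpa only [← ha0, hb1, zero_smul, one_smul, zero_add] using hy
      · left
        constructor <;> simp only [Complex.add_im, Complex.smul_im, smul_eq_mul] <;>
          nlinarith [hx.1, hx.2, hy.1, hy.2, mul_nonneg hb hy.1.le,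
            mul_nonneg hb (sub_nonneg.2 hy.2.le)]
    · simp only [Set.mem_singleton_iff] at hy
      subst hy
      rcases eq_or_lt_of_le ha with ha0 | ha0
      · right; simp [← ha0]
      · left
        have hb1 : b ≤ 1 := by linarith
        constructor <;> simp only [Complex.add_im, Complex.smul_im, Complex.zero_im, smul_eq_mul, mul_zero, add_zero] <;> nlinarith [hx.1, hx.2]
    · simp only [Set.mem_singleton_iff] at hx
      subst hx
      rcases eq_or_lt_of_le hb with hb0 | hb0
      · right; simp [← hb0]
      · left
        constructor <;> simp only [Complex.add_im, Complex.smul_im, Complex.zero_im, smul_eq_mul, mul_zero, zero_add] <;> nlinarith [hy.1, hy.2]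
    · simp only [Set.mem_singleton_iff] at hx hy
      subst hx; subst hy
      right; simp
  · rintro ⟨p, h, hnorm, ⟨t₀, ht₀, h0⟩, hsub⟩
    have hne : h ≠ 0 := by intro hh; rw [hh] at hnorm; simp at hnorm
    have key : ∀ s : ℝ, 0 ≤ s → (s : ℂ) * h ∈ Ω := by
      intro s hs
      have : (s : ℂ) * h = p + ((t₀ + s : ℝ) : ℂ) * h := by
        push_cast
        rw [add_mul, show p + (↑t₀ * h + ↑s * h) = (p + ↑t₀ * h) + ↑s * h from by ring,
          ← h0, zero_add]
      rw [this]
      exact hsub ⟨t₀ + s, by linarith, rfl⟩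
    have h1 : h ∈ Ω := by simpa using key 1 zero_le_one
    rcases h1 with h1 | h1
    · -- Im h > 0; take s = 1 / Im h, giving Im = 1
      obtain ⟨him, _⟩ := h1
      have := key (1 / h.im) (by positivity)
      rcases this with hmem | hmem
      · simp only [Set.mem_setOf_eq, Complex.mul_im, Complex.ofReal_re, Complex.ofReal_im,
          zero_mul, add_zero] at hmem
        rw [div_mul_cancel₀ 1 (ne_of_gt him)] at hmem
        exact absurd hmem.2 (by norm_num)
      · simp only [Set.mem_singleton_iff, mul_eq_zero] at hmem
        rcases hmem with hmem | hmem
        · rw [Complex.ofReal_eq_zero] at hmem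
          exact absurd hmem (by positivity)
        · exact hne hmem
    · simp only [Set.mem_singleton_iff] at h1
      exact hne h1
end

section
/- Let Ω ⊆ ℂ be a domain and let g : Ω → ℂ be holomorphic. If g is the locally uniform limit of derivatives fₙ' of holomorphic functions fₙ on Ω, then g has a holomorphic primitive on Ω (even if Ω is not simply connected). -/
open Filter Topology

theorem stmt_7 (Ω : Set ℂ) (hopen : IsOpen Ω) (hconn : IsConnected Ω)
    (g : ℂ → ℂ) (hg : DifferentiableOn ℂ g Ω)
    (F : ℕ → ℂ → ℂ) (hF : ∀ n, DifferentiableOn ℂ (F n) Ω)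
    (hlim : ∀ K ⊆ Ω, IsCompact K →
      TendstoUniformlyOn (fun n => deriv (F n)) g atTop K) :
    ∃ G : ℂ → ℂ, DifferentiableOn ℂ G Ω ∧ ∀ z ∈ Ω, HasDerivAt G (g z) z := by
  obtain ⟨z₀, hz₀⟩ := hconn.nonempty
  set h : ℕ → ℂ → ℂ := fun n z => F n z - F n z₀ with hh
  have hderiv : ∀ n, ∀ z ∈ Ω, HasDerivAt (h n) (deriv (F n) z) z := fun n z hz =>
    (((hF n z hz).differentiableAt (hopen.mem_nhds hz)).hasDerivAt).sub_const _
  set t := {y | y ∈ Ω ∧ CauchySeq fun n => h n y} with ht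
  have A : ∀ x ε, 0 < ε → x ∈ t → Metric.closedBall x ε ⊆ Ω → Metric.ball x ε ⊆ t := by
    intro x ε hε xt hsub y hy
    have hball : Metric.ball x ε ⊆ Ω := Metric.ball_subset_closedBall.trans hsub
    have hucs : UniformCauchySeqOn (fun n => deriv (F n)) atTop (Metric.ball x ε) :=
      ((hlim _ hsub (isCompact_closedBall x ε)).uniformCauchySeqOn).mono
        Metric.ball_subset_closedBall
    have hucs' : UniformCauchySeqOn
        (fun n z => (1 : ℂ →L[ℂ] ℂ).smulRight (deriv (F n) z)) atTop (Metric.ball x ε) := by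
      rw [uniformCauchySeqOn_iff_uniformCauchySeqOnFilter] at hucs ⊢
      exact hucs.one_smulRight
    refine ⟨hball hy, ?_⟩
    exact cauchy_map_of_uniformCauchySeqOn_fderiv Metric.isOpen_ball
      (convex_ball x ε).isPreconnected hucs'
      (fun n z hz => (hderiv n z (hball hz)).hasFDerivAt)
      (Metric.mem_ball_self hε) hy xt.2
  have open_t : IsOpen t := by
    rw [Metric.isOpen_iff]
    intro x hx
    obtain ⟨ε, hε, hsub⟩ := Metric.isOpen_iff.1 hopen x hx.1
    refine ⟨ε / 2, half_pos hε, A x (ε / 2) (half_pos hε) hx ?_⟩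
    exact (Metric.closedBall_subset_ball (by linarith)).trans hsub
  have hz₀t : z₀ ∈ t := ⟨hz₀, by
    have : (fun n => h n z₀) = fun _ => 0 := by funext n; simp [hh]
    rw [this]; exact cauchySeq_const 0⟩
  have hsubt : Ω ⊆ t := by
    refine hconn.isPreconnected.subset_of_closure_inter_subset open_t ⟨z₀, hz₀, hz₀t⟩ ?_
    rintro x ⟨hxc, hxΩ⟩
    obtain ⟨ε, hε, hsub⟩ := Metric.isOpen_iff.1 hopen x hxΩ
    obtain ⟨y, hyt, hxy⟩ := Metric.mem_closure_iff.1 hxc (ε / 4) (by linarith)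
    have hxy' : dist y x < ε / 4 := by rw [dist_comm]; exact hxy
    have hsub' : Metric.closedBall y (ε / 4) ⊆ Ω := by
      refine (Metric.closedBall_subset_ball' ?_).trans hsub
      linarith
    exact A y (ε / 4) (by linarith) hyt hsub' (Metric.mem_ball.2 (by rw [dist_comm]; linarith))
  set G : ℂ → ℂ := fun x => limUnder atTop (fun n => h n x) with hG
  have htend : ∀ x ∈ Ω, Tendsto (fun n => h n x) atTop (𝓝 (G x)) := fun x hx =>
    (hsubt hx).2.tendsto_limUnder
  have hdF : (deriv ∘ h : ℕ → ℂ → ℂ) = fun n => deriv (F n) := by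
    funext n z
    exact deriv_sub_const _
  have hloc : TendstoLocallyUniformlyOn (deriv ∘ h) g atTop Ω := by
    rw [hdF, tendstoLocallyUniformlyOn_iff_forall_isCompact hopen]
    exact fun K hK hKc => hlim K hK hKc
  have hGd : ∀ z ∈ Ω, HasDerivAt G (g z) z := by
    intro z hz
    refine hasDerivAt_of_tendsto_locally_uniformly_on' hopen hloc ?_ htend hz
    exact Eventually.of_forall fun n => (hF n).sub (differentiableOn_const _)
  exact ⟨G, fun z hz => ((hGd z hz).differentiableAt).differentiableWithinAt, hGd⟩
end

section
/- Let Ω ⊆ ℂ be a bounded convex domain, α ∈ ℕ, and f holomorphic on Ω such that f^(α) extends continuously to the closure of Ω. Then f^(l) extends continuously to the closure of Ω for every 0 ≤ l ≤ α. -/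
private lemma analyticOnNhd_iteratedDeriv {f : ℂ → ℂ} {Ω : Set ℂ}
    (hf : AnalyticOnNhd ℂ f Ω) (k : ℕ) : AnalyticOnNhd ℂ (iteratedDeriv k f) Ω := by
  induction k with
  | zero => simpa [iteratedDeriv_zero] using hf
  | succ n ih => rw [iteratedDeriv_succ]; exact ih.deriv

private lemma step (Ω : Set ℂ) (hopen : IsOpen Ω)
    (hbd : Bornology.IsBounded Ω) (hconv : Convex ℝ Ω)
    (f : ℂ → ℂ) (hf : DifferentiableOn ℂ f Ω) (k : ℕ)
    (hext : ∃ g : ℂ → ℂ, ContinuousOn g (closure Ω) ∧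
      ∀ z ∈ Ω, g z = iteratedDeriv (k + 1) f z) :
    ∃ g : ℂ → ℂ, ContinuousOn g (closure Ω) ∧
      ∀ z ∈ Ω, g z = iteratedDeriv k f z := by
  obtain ⟨g, hg, hgeq⟩ := hext
  have han : AnalyticOnNhd ℂ f Ω := hf.analyticOnNhd hopen
  have hcomp : IsCompact (closure Ω) :=
    Metric.isCompact_of_isClosed_isBounded isClosed_closure hbd.closure
  obtain ⟨C, hC⟩ := hcomp.exists_bound_of_continuousOn hg
  set F := iteratedDeriv k f with hF
  have hder : ∀ z ∈ Ω, HasDerivWithinAt F (iteratedDeriv (k + 1) f z) Ω z := by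
    intro z hz
    have hda : DifferentiableAt ℂ F z :=
      ((analyticOnNhd_iteratedDeriv han k) z hz).differentiableAt
    have : deriv F z = iteratedDeriv (k + 1) f z := by
      rw [iteratedDeriv_succ]
    rw [← this]
    exact hda.hasDerivAt.hasDerivWithinAt
  have hbound : ∀ z ∈ Ω, ‖iteratedDeriv (k + 1) f z‖ ≤ max C 0 := by
    intro z hz
    rw [← hgeq z hz]
    exact le_trans (hC z (subset_closure hz)) (le_max_left _ _)
  have hlip : LipschitzOnWith (Real.toNNReal (max C 0)) F Ω := by
    apply hconv.lipschitzOnWith_of_nnnorm_hasDerivWithin_le hder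
    intro z hz
    have := hbound z hz
    rwa [← NNReal.coe_le_coe, coe_nnnorm, Real.coe_toNNReal _ (le_max_right C 0)]
  -- extend real and imaginary parts
  have hlipre := Complex.reCLM.lipschitz.comp_lipschitzOnWith hlip
  have hlipim := Complex.imCLM.lipschitz.comp_lipschitzOnWith hlip
  obtain ⟨u, hu, huEq⟩ := hlipre.extend_real
  obtain ⟨v, hv, hvEq⟩ := hlipim.extend_real
  refine ⟨fun z => (u z : ℂ) + (v z : ℂ) * Complex.I, ?_, ?_⟩
  · exact (((Complex.continuous_ofReal.comp hu.continuous).add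
      ((Complex.continuous_ofReal.comp hv.continuous).mul continuous_const))).continuousOn
  · intro z hz
    have h1 := huEq hz
    have h2 := hvEq hz
    simp only [Function.comp_apply, Complex.reCLM_apply, Complex.imCLM_apply] at h1 h2
    simp only [← h1, ← h2, Complex.re_add_im]

theorem stmt_11 (Ω : Set ℂ) (hopen : IsOpen Ω) (hconn : IsConnected Ω)
    (hbd : Bornology.IsBounded Ω) (hconv : Convex ℝ Ω)
    (f : ℂ → ℂ) (hf : DifferentiableOn ℂ f Ω) (a : ℕ)
    (hext : ∃ g : ℂ → ℂ, ContinuousOn g (closure Ω) ∧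
      ∀ z ∈ Ω, g z = iteratedDeriv a f z) :
    ∀ l ≤ a, ∃ g : ℂ → ℂ, ContinuousOn g (closure Ω) ∧
      ∀ z ∈ Ω, g z = iteratedDeriv l f z := by
  have H : ∀ d : ℕ, ∃ g : ℂ → ℂ, ContinuousOn g (closure Ω) ∧
      ∀ z ∈ Ω, g z = iteratedDeriv (a - d) f z := by
    intro d
    induction d with
    | zero => simpa using hext
    | succ n ih =>
      rcases Nat.eq_zero_or_pos (a - n) with h0 | hpos
      · have : a - (n + 1) = a - n := by omega
        rw [this]; exact ih
      · have : a - n = (a - (n + 1)) + 1 := by omega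
        rw [this] at ih
        exact step Ω hopen hbd hconv f hf _ ih
  intro l hl
  have : a - (a - l) = l := by omega
  simpa [this] using H (a - l)
end

section
/- Let Ω ⊆ ℂ be an unbounded convex domain, α ∈ ℕ, and f holomorphic on Ω such that f^(α) extends continuously to the closure of Ω (closure in ℂ). Then f^(l) extends continuously to the closure of Ω for every 0 ≤ l ≤ α. -/
open intervalIntegral Set

private lemma analytic_iter {Ω : Set ℂ} (hopen : IsOpen Ω) {f : ℂ → ℂ}
    (hf : AnalyticOnNhd ℂ f Ω) (l : ℕ) : AnalyticOnNhd ℂ (iteratedDeriv l f) Ω := by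
  induction l with
  | zero => simpa [iteratedDeriv_zero] using hf
  | succ n ih => rw [iteratedDeriv_succ]; exact ih.deriv

private lemma step_s12 (Ω : Set ℂ) (hconv : Convex ℝ Ω) {z0 : ℂ} (hz0 : z0 ∈ Ω)
    (h h' : ℂ → ℂ) (hd : ∀ z ∈ Ω, HasDerivAt h (h' z) z)
    (hext : ∃ g : ℂ → ℂ, ContinuousOn g (closure Ω) ∧ ∀ z ∈ Ω, g z = h' z) :
    ∃ G : ℂ → ℂ, ContinuousOn G (closure Ω) ∧ ∀ z ∈ Ω, G z = h z := by
  obtain ⟨g, hgc, hgeq⟩ := hext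
  -- Tietze extension of g to all of ℂ
  obtain ⟨G0, hG0⟩ := (ContinuousMap.mk _
    (continuousOn_iff_continuous_restrict.mp hgc)).exists_restrict_eq
    (isClosed_closure (s := Ω))
  have hG0eq : ∀ x ∈ closure Ω, G0 x = g x := by
    intro x hx
    have := DFunLike.congr_fun hG0 (⟨x, hx⟩ : closure Ω)
    simpa using this
  refine ⟨fun z ↦ h z0 + (z - z0) • ∫ t in (0:ℝ)..1, G0 (z0 + t • (z - z0)), ?_, ?_⟩
  · apply Continuous.continuousOn
    have : Continuous fun z : ℂ ↦ ∫ t in (0:ℝ)..1, G0 (z0 + t • (z - z0)) := by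
      apply continuous_parametric_intervalIntegral_of_continuous' (μ := MeasureTheory.volume)
        (f := fun (z : ℂ) (t : ℝ) ↦ G0 (z0 + t • (z - z0)))
      exact G0.continuous.comp (by fun_prop)
    fun_prop
  · intro z hz
    have key : (z - z0) • ∫ t in (0:ℝ)..1, G0 (z0 + t • (z - z0)) = h (z0 + (z - z0)) - h z0 := by
      apply integral_unitInterval_deriv_eq_sub (𝕜 := ℂ)
      · exact (G0.continuous.comp (by fun_prop)).continuousOn
      · intro t ht
        have hmem : z0 + t • (z - z0) ∈ Ω := by
          have := hconv hz0 hz (a := 1 - t) (b := t) (by linarith [ht.2]) ht.1 (by ring)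
          convert this using 1
          simp only [Complex.real_smul]
          push_cast
          ring
        have : G0 (z0 + t • (z - z0)) = h' (z0 + t • (z - z0)) := by
          rw [hG0eq _ (subset_closure hmem), hgeq _ hmem]
        rw [this]
        exact hd _ hmem
    show h z0 + (z - z0) • ∫ t in (0:ℝ)..1, G0 (z0 + t • (z - z0)) = h z
    rw [key, show z0 + (z - z0) = z by ring]
    ring

theorem stmt_12 (Ω : Set ℂ) (hopen : IsOpen Ω) (hconn : IsConnected Ω)
    (hub : ¬ Bornology.IsBounded Ω) (hconv : Convex ℝ Ω)
    (f : ℂ → ℂ) (hf : DifferentiableOn ℂ f Ω) (a : ℕ)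
    (hext : ∃ g : ℂ → ℂ, ContinuousOn g (closure Ω) ∧
      ∀ z ∈ Ω, g z = iteratedDeriv a f z) :
    ∀ l ≤ a, ∃ g : ℂ → ℂ, ContinuousOn g (closure Ω) ∧
      ∀ z ∈ Ω, g z = iteratedDeriv l f z := by
  obtain ⟨z0, hz0⟩ := hconn.nonempty
  have han : AnalyticOnNhd ℂ f Ω := hf.analyticOnNhd hopen
  -- downward induction: extension for level (a - k)
  have main : ∀ k ≤ a, ∃ g : ℂ → ℂ, ContinuousOn g (closure Ω) ∧
      ∀ z ∈ Ω, g z = iteratedDeriv (a - k) f z := by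
    intro k hk
    induction k with
    | zero => simpa using hext
    | succ n ih =>
      have hn : n ≤ a := Nat.le_of_succ_le hk
      have prev := ih hn
      have hlev : a - n = (a - (n + 1)) + 1 := by omega
      rw [hlev] at prev
      apply step_s12 Ω hconv hz0 _ (iteratedDeriv ((a - (n+1)) + 1) f) _ prev
      intro z hz
      have hda : DifferentiableAt ℂ (iteratedDeriv (a - (n+1)) f) z :=
        ((analytic_iter hopen han _) z hz).differentiableAt
      have := hda.hasDerivAt
      rwa [show deriv (iteratedDeriv (a - (n+1)) f) z = iteratedDeriv ((a - (n+1)) + 1) f z by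
        rw [iteratedDeriv_succ]] at this
  intro l hl
  have := main (a - l) (Nat.sub_le a l)
  rwa [Nat.sub_sub_self hl] at this
end

section
/- Let Ω be an open subset of ℂ which is a union of open half-lines, let a < l < b be natural numbers, and let f be holomorphic on Ω with f^(a) and f^(b) bounded on Ω. Then f^(l) is bounded on Ω, and moreover sup_Ω |f^(l)| ≤ C · max(sup_Ω |f^(a)|, sup_Ω |f^(b)|) where C depends only on a, l, b. -/
open Set

private lemma iteratedDeriv_analytic {f : ℂ → ℂ} {Ω : Set ℂ}
    (hA : AnalyticOnNhd ℂ f Ω) (n : ℕ) : AnalyticOnNhd ℂ (iteratedDeriv n f) Ω := by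
  induction n with
  | zero => simpa using hA
  | succ n ih =>
    rw [iteratedDeriv_succ]
    exact ih.deriv

private lemma line_deriv {f : ℂ → ℂ} {Ω : Set ℂ} (hopen : IsOpen Ω)
    (hA : AnalyticOnNhd ℂ f Ω) (z h : ℂ) (r : ℝ)
    (hmem : ∀ t ∈ Set.Ioi (-r), z + (t : ℂ) * h ∈ Ω) (n : ℕ) :
    ∀ t ∈ Set.Ioi (-r), iteratedDeriv n (fun t : ℝ => f (z + (t : ℂ) * h)) t
      = h ^ n * iteratedDeriv n f (z + (t : ℂ) * h) := by
  induction n with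
  | zero => intro t ht; simp
  | succ n ih =>
    intro t ht
    have heq : (fun t : ℝ => iteratedDeriv n (fun t : ℝ => f (z + (t : ℂ) * h)) t)
        =ᶠ[nhds t] fun t : ℝ => h ^ n * iteratedDeriv n f (z + (t : ℂ) * h) := by
      filter_upwards [isOpen_Ioi.mem_nhds ht] with s hs using ih s hs
    rw [iteratedDeriv_succ, heq.deriv_eq]
    -- derivative of the line map
    have hL : HasDerivAt (fun t : ℝ => z + (t : ℂ) * h) h t := by
      simpa using ((hasDerivAt_id t).ofReal_comp.mul_const h).const_add z
    have hF := (iteratedDeriv_analytic hA n (z + (t : ℂ) * h) (hmem t ht)).differentiableAt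
    have hF' : HasDerivAt (iteratedDeriv n f)
        (deriv (iteratedDeriv n f) (z + (t : ℂ) * h)) (z + (t : ℂ) * h) := hF.hasDerivAt
    have hcomp : HasDerivAt (fun t : ℝ => iteratedDeriv n f (z + (t : ℂ) * h))
        (h * deriv (iteratedDeriv n f) (z + (t : ℂ) * h)) t := by
      have := (hF'.hasFDerivAt.restrictScalars ℝ).comp_hasDerivAt t hL
      convert this using 1
      · rfl
      · rfl
      · simp [mul_comm]
    rw [deriv_const_mul _ hcomp.differentiableAt, hcomp.deriv, iteratedDeriv_succ]
    ring

theorem stmt_13 (a l b : ℕ) (hal : a < l) (hlb : l < b) (C : ℝ)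
    (hLK : ∀ (g : ℝ → ℂ) (x : ℝ), ContDiffOn ℝ (⊤ : ℕ∞) g (Set.Ioi x) →
      ∀ Ma Mb : ℝ,
        (∀ t ∈ Set.Ioi x, ‖iteratedDerivWithin a g (Set.Ioi x) t‖ ≤ Ma) →
        (∀ t ∈ Set.Ioi x, ‖iteratedDerivWithin b g (Set.Ioi x) t‖ ≤ Mb) →
        ∀ t ∈ Set.Ioi x, ‖iteratedDerivWithin l g (Set.Ioi x) t‖ ≤ C * max Ma Mb)
    (Ω : Set ℂ) (hopen : IsOpen Ω)
    (hhalf : ∀ p ∈ Ω, ∃ h : ℂ, ‖h‖ = 1 ∧ ∃ r : ℝ, 0 < r ∧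
      {z : ℂ | ∃ t : ℝ, -r < t ∧ z = p + (t : ℂ) * h} ⊆ Ω)
    (f : ℂ → ℂ) (hf : DifferentiableOn ℂ f Ω) (Ma Mb : ℝ)
    (hMa : ∀ z ∈ Ω, ‖iteratedDeriv a f z‖ ≤ Ma)
    (hMb : ∀ z ∈ Ω, ‖iteratedDeriv b f z‖ ≤ Mb) :
    ∀ z ∈ Ω, ‖iteratedDeriv l f z‖ ≤ C * max Ma Mb := by
  intro z hz
  have hA : AnalyticOnNhd ℂ f Ω := hf.analyticOnNhd hopen
  obtain ⟨h, hh, r, hr, hsub⟩ := hhalf z hz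
  have hmem : ∀ t ∈ Set.Ioi (-r), z + (t : ℂ) * h ∈ Ω := by
    intro t ht
    exact hsub ⟨t, ht, rfl⟩
  set g : ℝ → ℂ := fun t => f (z + (t : ℂ) * h) with hg
  -- smoothness of g on the half-line
  have hL : ContDiff ℝ (⊤ : ℕ∞) (fun t : ℝ => z + (t : ℂ) * h) :=
    contDiff_const.add (Complex.ofRealCLM.contDiff.mul contDiff_const)
  have hgsm : ContDiffOn ℝ (⊤ : ℕ∞) g (Set.Ioi (-r)) := by
    have hfC : ContDiffOn ℂ (⊤ : ℕ∞) f Ω := hA.contDiffOn_of_completeSpace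
    exact (hfC.restrict_scalars ℝ).comp hL.contDiffOn hmem
  -- transfer iterated derivatives
  have key : ∀ n : ℕ, ∀ t ∈ Set.Ioi (-r),
      ‖iteratedDerivWithin n g (Set.Ioi (-r)) t‖ = ‖iteratedDeriv n f (z + (t : ℂ) * h)‖ := by
    intro n t ht
    have h1 : iteratedDerivWithin n g (Set.Ioi (-r)) t = iteratedDeriv n g t := by
      rw [iteratedDerivWithin_eq_iteratedFDerivWithin, iteratedDeriv_eq_iteratedFDeriv,
        iteratedFDerivWithin_of_isOpen n isOpen_Ioi ht]
    rw [h1, line_deriv hopen hA z h r hmem n t ht, norm_mul, norm_pow, hh, one_pow, one_mul]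
  have hbound := hLK g (-r) hgsm Ma Mb
    (fun t ht => by rw [key a t ht]; exact hMa _ (hmem t ht))
    (fun t ht => by rw [key b t ht]; exact hMb _ (hmem t ht))
    0 (by simpa using hr)
  rw [key l 0 (by simpa using hr)] at hbound
  simpa using hbound
end
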